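/- Let 𝔐 be a class of preference models and ★ a dynamic operator closed over 𝔐. The schema [★φ][<](φ → ξ) → (¬φ → [<][★φ](φ → ξ)) is valid in ⟨𝔐, ★⟩ for all φ ∈ L_0 and ξ ∈ L_≤(★) if and only if ★ is 𝔐-DP3-compliant. -/

import Mathlib

inductive PForm (P : Type) : Type
  | atom : P → PForm P
  | neg  : PForm P → PForm P
  | and  : PForm P → PForm P → PForm P

inductive DForm (P : Type) : Type
  | atom  : P → DForm P
  | neg   : DForm P → DForm P
  | and   : DForm P → DForm P → DForm P
  | all   : DForm P → DForm P
  | boxLe : DForm P → DForm P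
  | boxLt : DForm P → DForm P
  | dyn   : PForm P → DForm P → DForm P

structure PrefModel (P : Type) where
  W : Type
  le : W → W → Prop
  refl : ∀ w, le w w
  trans : ∀ w₁ w₂ w₃, le w₁ w₂ → le w₂ w₃ → le w₁ w₃
  wf : WellFounded (fun w w' => le w w' ∧ ¬ le w' w)
  val : P → Set W

namespace PrefModel
variable {P : Type}
def lt (M : PrefModel P) (w w' : M.W) : Prop := M.le w w' ∧ ¬ M.le w' w
def Min (M : PrefModel P) (S : Set M.W) : Set M.W :=
  {w | w ∈ S ∧ ¬ ∃ w' ∈ S, M.le w' w ∧ ¬ M.le w w'}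
end PrefModel

def psat {P : Type} (M : PrefModel P) : PForm P → M.W → Prop
  | .atom p, w => w ∈ M.val p
  | .neg φ, w => ¬ psat M φ w
  | .and φ ψ, w => psat M φ w ∧ psat M ψ w

def pext {P : Type} (M : PrefModel P) (φ : PForm P) : Set M.W := {w | psat M φ w}

structure DynOp (P : Type) where
  rel : (M : PrefModel P) → PForm P → M.W → M.W → Prop
  refl : ∀ M φ w, rel M φ w w
  trans : ∀ M φ w₁ w₂ w₃, rel M φ w₁ w₂ → rel M φ w₂ w₃ → rel M φ w₁ w₃
  wf : ∀ M φ, WellFounded (fun w w' => rel M φ w w' ∧ ¬ rel M φ w' w)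

def DynOp.apply {P : Type} (s : DynOp P) (M : PrefModel P) (φ : PForm P) : PrefModel P where
  W := M.W
  le := s.rel M φ
  refl := s.refl M φ
  trans := s.trans M φ
  wf := s.wf M φ
  val := M.val

def DynOp.srel {P : Type} (s : DynOp P) (M : PrefModel P) (φ : PForm P) (w w' : M.W) : Prop :=
  s.rel M φ w w' ∧ ¬ s.rel M φ w' w

def PForm.toD {P : Type} : PForm P → DForm P
  | .atom p => .atom p
  | .neg φ => .neg φ.toD
  | .and φ ψ => .and φ.toD ψ.toD

namespace DForm
variable {P : Type}
def imp (ξ ψ : DForm P) : DForm P := .neg (.and ξ (.neg ψ))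
def iff (ξ ψ : DForm P) : DForm P := .and (imp ξ ψ) (imp ψ ξ)
def or (ξ ψ : DForm P) : DForm P := .neg (.and (.neg ξ) (.neg ψ))
def exi (ξ : DForm P) : DForm P := .neg (.all (.neg ξ))
def diaLt (ξ : DForm P) : DForm P := .neg (.boxLt (.neg ξ))
def mu (ξ : DForm P) : DForm P := .and ξ (.neg (diaLt ξ))
def bel (ψ χ : DForm P) : DForm P := .all (imp (mu χ) ψ)
end DForm

def dsat {P : Type} (s : DynOp P) : DForm P → (M : PrefModel P) → M.W → Prop
  | .atom p, M, w => w ∈ M.val p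
  | .neg ξ, M, w => ¬ dsat s ξ M w
  | .and ξ₁ ξ₂, M, w => dsat s ξ₁ M w ∧ dsat s ξ₂ M w
  | .all ξ, M, _ => ∀ w', dsat s ξ M w'
  | .boxLe ξ, M, w => ∀ w', M.le w' w → dsat s ξ M w'
  | .boxLt ξ, M, w => ∀ w', M.lt w' w → dsat s ξ M w'
  | .dyn φ ξ, M, w => dsat s ξ (s.apply M φ) w

def ClosedOver {P : Type} (s : DynOp P) (𝔐 : Set (PrefModel P)) : Prop :=
  ∀ M ∈ 𝔐, ∀ φ : PForm P, s.apply M φ ∈ 𝔐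

/-- `★` is `𝔐`-DP3-compliant. -/
def DP3Compliant {P : Type} (s : DynOp P) (𝔐 : Set (PrefModel P)) : Prop :=
  ∀ M ∈ 𝔐, ∀ (φ : PForm P) (w w' : M.W),
    psat M φ w → ¬ psat M φ w' → M.lt w w' →
      ∀ ξ : DForm P, dsat s (.dyn φ ξ) M w →
        ∃ w'' : M.W, psat M φ w'' ∧ dsat s (.dyn φ ξ) M w'' ∧ s.srel M φ w'' w'

/-
At a `¬φ`-world `w'`, the schema for `ξ` says: if every `<_{★φ}`-predecessor of `w'` in `⟦φ⟧`
satisfies `[★φ]ξ`, then so does every `<`-predecessor of `w'` in `⟦φ⟧`. Instantiated at `¬ξ`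
this is the contrapositive of DP3a at `w'`; conversely, DP3a applied to `¬ξ` yields the schema.
-/

section Semantics

variable {P : Type} (s : DynOp P) (M : PrefModel P)

lemma psat_apply (φ ψ : PForm P) (w : M.W) : psat (s.apply M φ) ψ w ↔ psat M ψ w := by
  induction ψ with
  | atom p => rfl
  | neg χ ih => simp only [psat, ih]
  | and χ₁ χ₂ ih₁ ih₂ => simp only [psat, ih₁, ih₂]

lemma dsat_toD (ψ : PForm P) (w : M.W) : dsat s ψ.toD M w ↔ psat M ψ w := by
  induction ψ with
  | atom p => rfl
  | neg φ ih => simp only [PForm.toD, dsat, psat, ih]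
  | and φ χ ih₁ ih₂ => simp only [PForm.toD, dsat, psat, ih₁, ih₂]

lemma dsat_imp (ξ ψ : DForm P) (w : M.W) :
    dsat s (ξ.imp ψ) M w ↔ (dsat s ξ M w → dsat s ψ M w) := by
  simp only [DForm.imp, dsat, not_and, not_not]

lemma dsat_apply_toD_imp_iff (φ : PForm P) (ξ : DForm P) (u : M.W) :
    dsat s (φ.toD.imp ξ) (s.apply M φ) u ↔ (psat M φ u → dsat s (.dyn φ ξ) M u) :=
  (dsat_imp s (s.apply M φ) φ.toD ξ u).trans <|
    imp_congr_left ((dsat_toD s (s.apply M φ) φ u).trans (psat_apply s M φ φ u))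

lemma dsat_dyn_boxLt_imp_iff (φ : PForm P) (ξ : DForm P) (w : M.W) :
    dsat s (.dyn φ (.boxLt (φ.toD.imp ξ))) M w ↔
      ∀ u, psat M φ u → s.srel M φ u w → dsat s (.dyn φ ξ) M u :=
  forall_congr' fun u => (imp_congr_right fun _ => dsat_apply_toD_imp_iff s M φ ξ u).trans Imp.swap

lemma dsat_boxLt_dyn_imp_iff (φ : PForm P) (ξ : DForm P) (w : M.W) :
    dsat s (.boxLt (.dyn φ (φ.toD.imp ξ))) M w ↔
      ∀ u, psat M φ u → M.lt u w → dsat s (.dyn φ ξ) M u :=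
  forall_congr' fun u => (imp_congr_right fun _ => dsat_apply_toD_imp_iff s M φ ξ u).trans Imp.swap

lemma dsat_dp3_schema_iff (φ : PForm P) (ξ : DForm P) (w' : M.W) :
    dsat s ((DForm.dyn φ (.boxLt (φ.toD.imp ξ))).imp
        ((DForm.neg φ.toD).imp (.boxLt (.dyn φ (φ.toD.imp ξ))))) M w' ↔
      ((∀ u, psat M φ u → s.srel M φ u w' → dsat s (.dyn φ ξ) M u) → ¬ psat M φ w' →
        ∀ w, psat M φ w → M.lt w w' → dsat s (.dyn φ ξ) M w) := by
  rw [dsat_imp, dsat_imp, dsat_dyn_boxLt_imp_iff, dsat_boxLt_dyn_imp_iff, dsat.eq_2, dsat_toD]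

end Semantics

theorem dp3_compliance_characterisation_general {P : Type}
    (𝔐 : Set (PrefModel P)) (s : DynOp P) :
    (∀ (φ : PForm P) (ξ : DForm P), ∀ M ∈ 𝔐, ∀ w : M.W,
      dsat s ((DForm.dyn φ (.boxLt (φ.toD.imp ξ))).imp
        ((DForm.neg φ.toD).imp (.boxLt (.dyn φ (φ.toD.imp ξ))))) M w) ↔
      DP3Compliant s 𝔐 := by
  constructor
  · intro hvalid M hM φ w w' hw hw' hlt ξ hξ
    by_contra! hnone
    have hbelow : ∀ u, psat M φ u → s.srel M φ u w' → dsat s (.dyn φ (.neg ξ)) M u :=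
      fun u hu hsrel hξu => hnone u hu hξu hsrel
    exact (dsat_dp3_schema_iff s M φ (.neg ξ) w').mp (hvalid φ (.neg ξ) M hM w') hbelow hw'
      w hw hlt hξ
  · intro hdp3 φ ξ M hM w'
    refine (dsat_dp3_schema_iff s M φ ξ w').mpr fun hbelow hw' w hw hlt => ?_
    by_contra hξ
    obtain ⟨w'', hw'', hnξ, hsrel⟩ := hdp3 M hM φ w w' hw hw' hlt (.neg ξ) hξ
    exact hnξ (hbelow w'' hw'' hsrel)

theorem dp3_compliance_characterisation {P : Type}
    (𝔐 : Set (PrefModel P)) (s : DynOp P) (hclosed : ClosedOver s 𝔐) :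
    (∀ (φ : PForm P) (ξ : DForm P), ∀ M ∈ 𝔐, ∀ w : M.W,
      dsat s ((DForm.dyn φ (.boxLt (φ.toD.imp ξ))).imp
        ((DForm.neg φ.toD).imp (.boxLt (.dyn φ (φ.toD.imp ξ))))) M w) ↔
      DP3Compliant s 𝔐 :=
  dp3_compliance_characterisation_general 𝔐 s
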